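/- arXiv:1508.06883 — 3 statements merged into one kernel-verified Lean document; each statement's English description precedes it below -/
import Mathlib

section
/- Let k, n, m be integers with k ≥ 1, n ≥ k and 0 ≤ m ≤ n − k. Then for every x > 0, M_{n,k}(e_m; x) = ((n−k+m)!·(n−m)!)/((n−k)!·n!) · x^m, where e_m(t) = t^m. In other words, ((2n−k+1)!·x^{n+1}/(n!·(n−k)!)) ∫_0^∞ t^{n−k+m}/(x+t)^{2n−k+2} dt = ((n−k+m)!·(n−m)!)/((n−k)!·n!) · x^m. -/
/-!
With `a = n-k+m` and `b = n-m`, the integral in `M_{n,k}(e_m;x)` is the beta-type integral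
`∫₀^∞ t^a / (x+t)^(a+b+2) dt = a! b! / ((a+b+1)! x^(b+1))`.
Integrating the derivative of `t^(a+1) / (x+t)^(c+1)`, which vanishes at `0` and at `∞`, gives
`∫ t^(a+1) / (x+t)^(c+2) = (a+1)/(c+1) · ∫ t^a / (x+t)^(c+1)`; this lowers `a` to the
elementary case `a = 0`.
-/

open MeasureTheory Set Filter Topology

/-- The Gamma-type operator `M_{n,k}(f;x)`. -/
noncomputable def Mnk (n k : ℕ) (f : ℝ → ℝ) (x : ℝ) : ℝ :=
  (((2 * n - k + 1).factorial : ℝ) * x ^ (n + 1) /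
      ((n.factorial : ℝ) * ((n - k).factorial : ℝ))) *
    ∫ t in Ioi (0 : ℝ), t ^ (n - k) / (x + t) ^ (2 * n - k + 2) * f t

/-- The polynomial weight: `w_0 = 1`, `w_p(x) = 1/(1+x^p)` for `p ≥ 1`. -/
noncomputable def wp (p : ℕ) (x : ℝ) : ℝ := if p = 0 then 1 else 1 / (1 + x ^ p)

/-- The weighted sup-norm `‖f‖_p = sup_{x ≥ 0} w_p(x)|f(x)|`. -/
noncomputable def pNorm (p : ℕ) (f : ℝ → ℝ) : ℝ :=
  ⨆ x : {x : ℝ // 0 ≤ x}, wp p x.val * |f x.val|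

/-- Second symmetric difference `Δ_h² f`. -/
def Delta2 (h : ℝ) (f : ℝ → ℝ) (x : ℝ) : ℝ := f (x + 2 * h) - 2 * f (x + h) + f x

/-- Second weighted modulus of smoothness `ω_p²(f;δ)`. -/
noncomputable def omega2 (p : ℕ) (f : ℝ → ℝ) (δ : ℝ) : ℝ :=
  ⨆ h : {h : ℝ // 0 < h ∧ h ≤ δ}, pNorm p (Delta2 h.val f)

/-- First weighted modulus `ω_p¹(f;δ)`. -/
noncomputable def omega1 (p : ℕ) (f : ℝ → ℝ) (δ : ℝ) : ℝ :=
  sSup {y : ℝ | ∃ t x : ℝ, 0 ≤ t ∧ 0 ≤ x ∧ |t - x| ≤ δ ∧ y = wp p x * |f t - f x|}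

/-- Membership in the weighted space `C_p`: `w_p·f` is bounded and uniformly
continuous on `[0,∞)`. -/
def CpMem (p : ℕ) (f : ℝ → ℝ) : Prop :=
  (∃ B : ℝ, ∀ x ≥ (0 : ℝ), |wp p x * f x| ≤ B) ∧
    UniformContinuousOn (fun x => wp p x * f x) (Ici 0)

/-- Steklov mean `f_h`. -/
noncomputable def steklov (f : ℝ → ℝ) (h : ℝ) (x : ℝ) : ℝ :=
  4 / h ^ 2 *
    ∫ s in (0 : ℝ)..(h / 2), ∫ t in (0 : ℝ)..(h / 2),
      (2 * f (x + s + t) - f (x + 2 * (s + t)))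

lemma integrableOn_Ioi_pow_div_add_pow {x : ℝ} (hx : 0 < x) {a c : ℕ} (hac : a + 2 ≤ c) :
    IntegrableOn (fun t : ℝ => t ^ a / (x + t) ^ c) (Ioi 0) := by
  have hcont : ∀ s ⊆ Ici (0 : ℝ), ContinuousOn (fun t : ℝ => t ^ a / (x + t) ^ c) s :=
    fun s hs => by
      refine (continuous_pow a).continuousOn.div (by fun_prop) fun t ht => ?_
      exact pow_ne_zero _ (by linarith [mem_Ici.1 (hs ht)])
  rw [← Ioc_union_Ioi_eq_Ioi hx.le]
  refine IntegrableOn.union ?_ ?_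
  · exact ((hcont _ Icc_subset_Ici_self).integrableOn_compact isCompact_Icc).mono_set
      Ioc_subset_Icc_self
  · have hlt : (a : ℝ) - c < -1 := by
      have : (a : ℝ) + 2 ≤ c := by exact_mod_cast hac
      linarith
    refine (integrableOn_Ioi_rpow_of_lt hlt hx).mono'
      ((hcont _ fun t ht => le_of_lt (hx.trans ht)).aestronglyMeasurable measurableSet_Ioi) ?_
    filter_upwards [ae_restrict_mem measurableSet_Ioi] with t ht
    have ht0 : 0 < t := hx.trans ht
    rw [Real.norm_of_nonneg (by positivity), Real.rpow_sub ht0, Real.rpow_natCast,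
      Real.rpow_natCast]
    gcongr
    linarith

lemma tendsto_pow_div_add_pow_atTop {x : ℝ} (hx : 0 ≤ x) {a c : ℕ} (hac : a < c) :
    Tendsto (fun t : ℝ => t ^ a / (x + t) ^ c) atTop (𝓝 0) := by
  refine squeeze_zero' ?_ ?_ (tendsto_pow_atTop (Nat.sub_ne_zero_of_lt hac)).inv_tendsto_atTop
  · filter_upwards [eventually_gt_atTop 0] with t ht
    positivity
  · filter_upwards [eventually_gt_atTop 0] with t ht
    calc t ^ a / (x + t) ^ c ≤ t ^ a / t ^ c := by gcongr; linarith
      _ = (t ^ (c - a))⁻¹ := by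
        rw [← Nat.add_sub_cancel' hac.le, pow_add, Nat.add_sub_cancel_left]
        field_simp

lemma integral_Ioi_pow_succ_div_add_pow_succ {x : ℝ} (hx : 0 < x) {a c : ℕ} (hac : a + 1 ≤ c) :
    ∫ t in Ioi (0 : ℝ), t ^ (a + 1) / (x + t) ^ (c + 2) =
      (a + 1) / (c + 1) * ∫ t in Ioi (0 : ℝ), t ^ a / (x + t) ^ (c + 1) := by
  have hderiv : ∀ t ∈ Ici (0 : ℝ), HasDerivAt (fun t => t ^ (a + 1) / (x + t) ^ (c + 1))
      ((a + 1) * (t ^ a / (x + t) ^ (c + 1)) - (c + 1) * (t ^ (a + 1) / (x + t) ^ (c + 2))) t := by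
    intro t ht
    have hxt : x + t ≠ 0 := by linarith [mem_Ici.1 ht]
    refine ((hasDerivAt_pow (a + 1) t).fun_div
      ((hasDerivAt_id' t).const_add x |>.fun_pow (c + 1)) (pow_ne_zero _ hxt)).congr_deriv ?_
    simp only [Nat.add_sub_cancel]
    push_cast
    field_simp
    ring
  have hint₁ := integrableOn_Ioi_pow_div_add_pow hx (by omega : a + 2 ≤ c + 1)
  have hint₂ := integrableOn_Ioi_pow_div_add_pow hx (by omega : a + 1 + 2 ≤ c + 2)
  have hparts := integral_Ioi_of_hasDerivAt_of_tendsto' hderiv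
    ((hint₁.const_mul _).sub (hint₂.const_mul _)) (tendsto_pow_div_add_pow_atTop hx.le (by omega))
  rw [integral_sub (hint₁.const_mul _) (hint₂.const_mul _), integral_const_mul,
    integral_const_mul, zero_pow (Nat.succ_ne_zero a), zero_div, sub_zero] at hparts
  field_simp
  linarith

lemma integral_Ioi_one_div_add_pow {x : ℝ} (hx : 0 < x) (b : ℕ) :
    ∫ t in Ioi (0 : ℝ), 1 / (x + t) ^ (b + 2) = 1 / ((b + 1) * x ^ (b + 1)) := by
  have hderiv : ∀ t ∈ Ici (0 : ℝ),
      HasDerivAt (fun t => -((b + 1) * (x + t) ^ (b + 1))⁻¹) (1 / (x + t) ^ (b + 2)) t := by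
    intro t ht
    have hxt : 0 < x + t := by linarith [mem_Ici.1 ht]
    refine ((((hasDerivAt_id' t).const_add x).fun_pow (b + 1)).const_mul ((b : ℝ) + 1)
      |>.fun_inv (by positivity) |>.fun_neg).congr_deriv ?_
    simp only [Nat.add_sub_cancel]
    push_cast
    field_simp
    ring
  have hint := integrableOn_Ioi_pow_div_add_pow hx (by omega : 0 + 2 ≤ b + 2)
  have hlim : Tendsto (fun t => -((b + 1) * (x + t) ^ (b + 1))⁻¹) atTop (𝓝 0) := by
    have := ((tendsto_pow_div_add_pow_atTop hx.le (by omega : 0 < b + 1)).div_const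
      ((b : ℝ) + 1)).neg
    rw [zero_div, neg_zero] at this
    refine this.congr fun t => ?_
    rw [pow_zero, mul_comm, div_div, one_div]
  rw [integral_Ioi_of_hasDerivAt_of_tendsto' hderiv (by simpa using hint) hlim]
  field_simp
  ring

lemma integral_Ioi_pow_div_add_pow {x : ℝ} (hx : 0 < x) (a b : ℕ) :
    ∫ t in Ioi (0 : ℝ), t ^ a / (x + t) ^ (a + b + 2) =
      a.factorial * b.factorial / ((a + b + 1).factorial * x ^ (b + 1)) := by
  induction a with
  | zero =>
    simp only [pow_zero, zero_add, Nat.factorial_zero, Nat.factorial_succ, Nat.cast_mul,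
      Nat.cast_one, one_mul]
    rw [integral_Ioi_one_div_add_pow hx b]
    push_cast
    field_simp
  | succ a ih =>
    rw [show a + 1 + b + 2 = (a + b + 1) + 2 by omega,
      integral_Ioi_pow_succ_div_add_pow_succ hx (by omega), ih,
      show a + 1 + b + 1 = (a + b + 1) + 1 by omega, Nat.factorial_succ (a + b + 1),
      Nat.factorial_succ a]
    push_cast
    field_simp

theorem Mnk_monomial_general (k n m : ℕ) (hkn : k ≤ n) (hm : m ≤ n - k)
    (x : ℝ) (hx : 0 < x) :
    Mnk n k (fun t => t ^ m) x =
      (((n - k + m).factorial : ℝ) * ((n - m).factorial : ℝ)) /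
        (((n - k).factorial : ℝ) * (n.factorial : ℝ)) * x ^ m := by
  have hintegrand : ∀ t : ℝ, t ^ (n - k) / (x + t) ^ (2 * n - k + 2) * t ^ m =
      t ^ (n - k + m) / (x + t) ^ ((n - k + m) + (n - m) + 2) := fun t => by
    rw [show n - k + m + (n - m) = 2 * n - k by omega, pow_add]
    ring
  simp only [Mnk, hintegrand, integral_Ioi_pow_div_add_pow hx,
    show n - k + m + (n - m) + 1 = 2 * n - k + 1 by omega]
  rw [show n + 1 = (n - m + 1) + m by omega, pow_add]
  field_simp

/-- Monomial moments of the Gamma-type operator: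
`M_{n,k}(e_m;x) = ((n−k+m)!·(n−m)!)/((n−k)!·n!)·x^m`. -/
theorem Mnk_monomial (k n m : ℕ) (hk : 1 ≤ k) (hkn : k ≤ n) (hm : m ≤ n - k)
    (x : ℝ) (hx : 0 < x) :
    Mnk n k (fun t => t ^ m) x =
      (((n - k + m).factorial : ℝ) * ((n - m).factorial : ℝ)) /
        (((n - k).factorial : ℝ) * (n.factorial : ℝ)) * x ^ m :=
  Mnk_monomial_general k n m hkn hm x hx
end

section
/- Let k, n be integers with k ≥ 1 and n ≥ k + 1. Then for every x > 0, the first central moment of the Gamma-type operator satisfies M_{n,k}(φ_{x,1}; x) = ((1−k)/n)·x. -/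
open MeasureTheory Set

/-! For `j ≤ n` the kernel of `M_{n,k}` times `t ^ j` is `t ^ m / (x + t) ^ (m + a + 2)` with
`m = n - k + j` and `a = n - j`. The Beta-type integral
`∫₀^∞ t ^ m / (x + t) ^ (m + a + 2) dt = m! a! / ((m + a + 1)! x ^ (a + 1))`
follows by induction on `m`, splitting `t = (x + t) - x`, hence
`M_{n,k}(t ^ j; x) = (n - k + j)! (n - j)! / (n! (n - k)!) x ^ j`. So `M_{n,k}(1; x) = 1`,
`M_{n,k}(t; x) = (n - k + 1) x / n`, and linearity gives the first central moment. -/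

open Filter Topology

section BetaIntegral

variable {x : ℝ}

lemma hasDerivAt_inv_add_pow (a : ℕ) {t : ℝ} (ht : 0 < x + t) :
    HasDerivAt (fun s : ℝ => -((x + s) ^ (a + 1))⁻¹ / (a + 1))
      (1 / (x + t) ^ (a + 2)) t := by
  have hpow : HasDerivAt (fun s : ℝ => (x + s) ^ (a + 1)) ((a + 1) * (x + t) ^ a) t := by
    simpa using ((hasDerivAt_id t).const_add x).fun_pow (a + 1)
  refine ((hpow.fun_inv (pow_pos ht _).ne').fun_neg.div_const ((a : ℝ) + 1)).congr_deriv ?_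
  field_simp
  ring

lemma tendsto_inv_add_pow_atTop (a : ℕ) :
    Tendsto (fun s : ℝ => -((x + s) ^ (a + 1))⁻¹ / (a + 1)) atTop (𝓝 0) := by
  have : Tendsto (fun s : ℝ => ((x + s) ^ (a + 1))⁻¹) atTop (𝓝 0) :=
    tendsto_inv_atTop_zero.comp
      ((tendsto_pow_atTop (Nat.succ_ne_zero a)).comp (tendsto_atTop_add_const_left _ x tendsto_id))
  simpa using (this.neg).div_const ((a : ℝ) + 1)

lemma integrableOn_one_div_add_pow (hx : 0 < x) (a : ℕ) :
    IntegrableOn (fun t : ℝ => 1 / (x + t) ^ (a + 2)) (Ioi 0) :=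
  integrableOn_Ioi_deriv_of_nonneg' (fun t (ht : 0 ≤ t) => hasDerivAt_inv_add_pow a (by linarith))
    (fun t (ht : 0 < t) => by positivity) (tendsto_inv_add_pow_atTop a)

lemma integral_one_div_add_pow (hx : 0 < x) (a : ℕ) :
    ∫ t in Ioi (0 : ℝ), 1 / (x + t) ^ (a + 2) = 1 / ((a + 1) * x ^ (a + 1)) := by
  rw [integral_Ioi_of_hasDerivAt_of_nonneg'
    (fun t (ht : 0 ≤ t) => hasDerivAt_inv_add_pow a (by linarith))
    (fun t (ht : 0 < t) => by positivity) (tendsto_inv_add_pow_atTop a)]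
  field_simp
  simp

lemma integrableOn_pow_div_add_pow (hx : 0 < x) (m a : ℕ) :
    IntegrableOn (fun t : ℝ => t ^ m / (x + t) ^ (m + a + 2)) (Ioi 0) := by
  refine (integrableOn_one_div_add_pow hx a).mono' ?_ ?_
  · refine ContinuousOn.aestronglyMeasurable ?_ measurableSet_Ioi
    exact .div (by fun_prop) (by fun_prop) fun t (ht : 0 < t) => (pow_pos (by linarith) _).ne'
  · filter_upwards [ae_restrict_mem measurableSet_Ioi] with t ht
    have ht : 0 < t := ht
    have hxt : 0 < x + t := by linarith
    rw [Real.norm_eq_abs, abs_of_nonneg (by positivity), add_assoc, pow_add, ← div_div,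
      div_le_div_iff_of_pos_right (by positivity)]
    exact div_le_one_of_le₀ (pow_le_pow_left₀ ht.le (by linarith) m) (by positivity)

lemma integral_pow_div_add_pow (hx : 0 < x) (m a : ℕ) :
    ∫ t in Ioi (0 : ℝ), t ^ m / (x + t) ^ (m + a + 2) =
      m.factorial * a.factorial / ((m + a + 1).factorial * x ^ (a + 1)) := by
  induction m generalizing a with
  | zero =>
    simp only [pow_zero, zero_add, Nat.factorial_zero, Nat.factorial_succ a]
    rw [integral_one_div_add_pow hx]
    field_simp
    push_cast
    ring
  | succ m ih =>
    have split : ∀ t ∈ Ioi (0 : ℝ), t ^ (m + 1) / (x + t) ^ (m + 1 + a + 2) =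
        t ^ m / (x + t) ^ (m + a + 2) - x * (t ^ m / (x + t) ^ (m + (a + 1) + 2)) := by
      intro t (ht : 0 < t)
      have hxt : x + t ≠ 0 := by linarith
      field_simp
      ring
    rw [setIntegral_congr_fun measurableSet_Ioi split,
      integral_sub (integrableOn_pow_div_add_pow hx m a)
        ((integrableOn_pow_div_add_pow hx m (a + 1)).const_mul x),
      integral_const_mul, ih, ih]
    simp only [Nat.factorial_succ, show m + (a + 1) + 1 = m + a + 1 + 1 by ring,
      show m + 1 + a + 1 = m + a + 1 + 1 by ring]
    field_simp
    push_cast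
    ring

end BetaIntegral

section Moments

variable {n k : ℕ} {x : ℝ}

lemma Mnk_sub_mul {f g : ℝ → ℝ}
    (hf : IntegrableOn (fun t => t ^ (n - k) / (x + t) ^ (2 * n - k + 2) * f t) (Ioi 0))
    (hg : IntegrableOn (fun t => t ^ (n - k) / (x + t) ^ (2 * n - k + 2) * g t) (Ioi 0))
    (c : ℝ) : Mnk n k (fun t => f t - c * g t) x = Mnk n k f x - c * Mnk n k g x := by
  have hint : ∫ t in Ioi (0 : ℝ), t ^ (n - k) / (x + t) ^ (2 * n - k + 2) * (f t - c * g t) =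
      (∫ t in Ioi (0 : ℝ), t ^ (n - k) / (x + t) ^ (2 * n - k + 2) * f t) -
        c * ∫ t in Ioi (0 : ℝ), t ^ (n - k) / (x + t) ^ (2 * n - k + 2) * g t := by
    rw [← integral_const_mul, ← integral_sub hf (hg.const_mul c)]
    simp only [mul_sub, mul_left_comm c]
  rw [Mnk, Mnk, Mnk, hint]
  ring

lemma Mnk_kernel_mul_pow {j : ℕ} (hk : k ≤ n) (hj : j ≤ n) (t : ℝ) :
    t ^ (n - k) / (x + t) ^ (2 * n - k + 2) * t ^ j =
      t ^ (n - k + j) / (x + t) ^ (n - k + j + (n - j) + 2) := by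
  rw [show 2 * n - k + 2 = n - k + j + (n - j) + 2 by omega]
  ring

lemma integrableOn_Mnk_kernel_mul_pow {j : ℕ} (hk : k ≤ n) (hj : j ≤ n) (hx : 0 < x) :
    IntegrableOn (fun t => t ^ (n - k) / (x + t) ^ (2 * n - k + 2) * t ^ j) (Ioi 0) := by
  simp_rw [Mnk_kernel_mul_pow hk hj]
  exact integrableOn_pow_div_add_pow hx _ _

lemma Mnk_pow {j : ℕ} (hk : k ≤ n) (hj : j ≤ n) (hx : 0 < x) :
    Mnk n k (fun t => t ^ j) x =
      (n - k + j).factorial * (n - j).factorial / (n.factorial * (n - k).factorial) * x ^ j := by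
  rw [Mnk]
  simp_rw [Mnk_kernel_mul_pow hk hj]
  rw [integral_pow_div_add_pow hx, show n - k + j + (n - j) + 1 = 2 * n - k + 1 by omega,
    show n + 1 = j + (n - j + 1) by omega, pow_add]
  field_simp

end Moments

theorem Mnk_central_moment_one_general (k n : ℕ) (hn : k + 1 ≤ n)
    (x : ℝ) (hx : 0 < x) :
    Mnk n k (fun t => (t - x) ^ 1) x = (1 - (k : ℝ)) / (n : ℝ) * x := by
  have hk : k ≤ n := by omega
  have hφ : (fun t : ℝ => (t - x) ^ 1) = fun t => t ^ 1 - x * t ^ 0 := by ext; ring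
  rw [hφ, Mnk_sub_mul (integrableOn_Mnk_kernel_mul_pow hk (by omega) hx)
      (integrableOn_Mnk_kernel_mul_pow hk (by omega) hx), Mnk_pow hk (by omega) hx,
    Mnk_pow hk (by omega) hx]
  obtain ⟨m, rfl⟩ : ∃ m, n = k + m + 1 := ⟨n - k - 1, by omega⟩
  simp only [show k + m + 1 - k = m + 1 by omega, Nat.add_sub_cancel, Nat.sub_zero,
    Nat.factorial_succ]
  field_simp
  push_cast
  ring

/-- First central moment: `M_{n,k}(φ_{x,1};x) = ((1−k)/n)·x`. -/
theorem Mnk_central_moment_one (k n : ℕ) (hk : 1 ≤ k) (hn : k + 1 ≤ n)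
    (x : ℝ) (hx : 0 < x) :
    Mnk n k (fun t => (t - x) ^ 1) x = (1 - (k : ℝ)) / (n : ℝ) * x :=
  Mnk_central_moment_one_general k n hn x hx
end

section
/- Fix p ∈ ℕ, f ∈ C_p and h > 0, and define the Steklov mean f_h(x) = (4/h²) ∫_0^{h/2} ∫_0^{h/2} [2f(x+s+t) − f(x+2(s+t))] ds dt for x ≥ 0. Then ‖f − f_h‖_p ≤ ω_p²(f; h). -/
/-! Since `Δ²_{s+t} f(x) = f(x) - (2 f(x+s+t) - f(x+2(s+t)))`, the difference `f - f_h` is the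
average of `Δ²_{s+t} f` over the square `(s, t) ∈ [0, h/2]²`, and every `Δ²_u f` with
`0 < u ≤ h` has weighted norm at most `ω_p²(f; h)`. That this supremum is a genuine one (and not
the junk value `0` of an unbounded real supremum) follows from the growth of `f ∈ C_p`:
`w_p(x) ≤ 2^p (1 + c^p) w_p(x + a)` for `0 ≤ a ≤ c`. -/

open MeasureTheory Set

lemma wp_pos (p : ℕ) {x : ℝ} (hx : 0 ≤ x) : 0 < wp p x := by
  unfold wp
  split_ifs
  · exact one_pos
  · positivity

lemma continuousOn_wp (p : ℕ) : ContinuousOn (wp p) (Ici 0) := by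
  unfold wp
  split_ifs with hp
  · exact continuousOn_const
  · exact continuousOn_const.div (by fun_prop) fun x hx =>
      (add_pos_of_pos_of_nonneg one_pos (pow_nonneg hx p)).ne'

lemma wp_le_mul_wp_add (p : ℕ) {x a c : ℝ} (hx : 0 ≤ x) (ha : 0 ≤ a) (hac : a ≤ c) :
    wp p x ≤ 2 ^ p * (1 + c ^ p) * wp p (x + a) := by
  have hxp : 0 ≤ x ^ p := pow_nonneg hx p
  have hcp : 0 ≤ c ^ p := pow_nonneg (ha.trans hac) p
  have h2p : (1 : ℝ) ≤ 2 ^ p := one_le_pow₀ one_le_two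
  have hadd : 1 + (x + a) ^ p ≤ 2 ^ p * (1 + c ^ p) * (1 + x ^ p) := by
    have : (x + a) ^ p ≤ 2 ^ p * (x ^ p + c ^ p) := calc
      (x + a) ^ p ≤ 2 ^ (p - 1) * (x ^ p + a ^ p) := add_pow_le hx ha p
      _ ≤ 2 ^ p * (x ^ p + c ^ p) := by
        gcongr
        · exact one_le_two
        · omega
    nlinarith [mul_nonneg hcp hxp]
  unfold wp
  split_ifs with hp
  · subst hp; norm_num
  · rwa [mul_one_div, div_le_div_iff₀ (by positivity) (by positivity), one_mul]

lemma pNorm_le {p : ℕ} {g : ℝ → ℝ} {M : ℝ} (hg : ∀ x, 0 ≤ x → wp p x * |g x| ≤ M) :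
    pNorm p g ≤ M :=
  haveI : Nonempty {x : ℝ // 0 ≤ x} := ⟨⟨0, le_rfl⟩⟩
  ciSup_le fun x => hg x x.2

lemma le_pNorm {p : ℕ} {g : ℝ → ℝ} {M : ℝ} (hg : ∀ x, 0 ≤ x → wp p x * |g x| ≤ M) {x : ℝ}
    (hx : 0 ≤ x) : wp p x * |g x| ≤ pNorm p g :=
  le_ciSup (f := fun y : {y : ℝ // 0 ≤ y} => wp p y * |g y|)
    ⟨M, by rintro _ ⟨y, rfl⟩; exact hg y y.2⟩ ⟨x, hx⟩

namespace CpMem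

variable {p : ℕ} {f : ℝ → ℝ}

lemma continuousOn (hf : CpMem p f) : ContinuousOn f (Ici 0) :=
  (hf.2.continuousOn.div (continuousOn_wp p) fun _ hx => (wp_pos p hx).ne').congr
    fun x hx => (mul_div_cancel_left₀ (f x) (wp_pos p hx).ne').symm

lemma exists_bound_shift (hf : CpMem p f) (c : ℝ) :
    ∃ M, ∀ x, 0 ≤ x → ∀ a ∈ Icc 0 c, wp p x * |f (x + a)| ≤ M := by
  obtain ⟨⟨B, hB⟩, -⟩ := hf
  refine ⟨2 ^ p * (1 + c ^ p) * B, fun x hx a ⟨ha, hac⟩ => ?_⟩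
  have hc : 0 ≤ c := ha.trans hac
  have hxa : 0 ≤ x + a := add_nonneg hx ha
  calc wp p x * |f (x + a)| ≤ 2 ^ p * (1 + c ^ p) * wp p (x + a) * |f (x + a)| :=
        mul_le_mul_of_nonneg_right (wp_le_mul_wp_add p hx ha hac) (abs_nonneg _)
    _ = 2 ^ p * (1 + c ^ p) * |wp p (x + a) * f (x + a)| := by
        rw [abs_mul, abs_of_pos (wp_pos p hxa), mul_assoc]
    _ ≤ 2 ^ p * (1 + c ^ p) * B := mul_le_mul_of_nonneg_left (hB _ hxa) (by positivity)

lemma exists_bound_delta2 (hf : CpMem p f) (δ : ℝ) :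
    ∃ M, ∀ u ∈ Icc 0 δ, ∀ x, 0 ≤ x → wp p x * |Delta2 u f x| ≤ M := by
  obtain ⟨M, hM⟩ := hf.exists_bound_shift (2 * δ)
  refine ⟨4 * M, fun u ⟨hu, huδ⟩ x hx => ?_⟩
  have h2 := hM x hx (2 * u) ⟨by linarith, by linarith⟩
  have h1 := hM x hx u ⟨hu, by linarith⟩
  have h0 := hM x hx 0 ⟨le_rfl, by linarith⟩
  rw [add_zero] at h0
  have htri : |Delta2 u f x| ≤ |f (x + 2 * u)| + 2 * |f (x + u)| + |f x| := by
    calc |Delta2 u f x| ≤ |f (x + 2 * u) - 2 * f (x + u)| + |f x| := abs_add_le _ _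
      _ ≤ |f (x + 2 * u)| + |2 * f (x + u)| + |f x| := by gcongr; exact abs_sub _ _
      _ = |f (x + 2 * u)| + 2 * |f (x + u)| + |f x| := by rw [abs_mul, abs_two]
  nlinarith [mul_le_mul_of_nonneg_left htri (wp_pos p hx).le]

lemma weighted_delta2_le_omega2 (hf : CpMem p f) {u δ x : ℝ} (hu : 0 < u) (huδ : u ≤ δ)
    (hx : 0 ≤ x) : wp p x * |Delta2 u f x| ≤ omega2 p f δ := by
  obtain ⟨M, hM⟩ := hf.exists_bound_delta2 δ
  calc wp p x * |Delta2 u f x| ≤ pNorm p (Delta2 u f) := le_pNorm (hM u ⟨hu.le, huδ⟩) hx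
    _ ≤ omega2 p f δ := by
      refine le_ciSup (f := fun v : {v : ℝ // 0 < v ∧ v ≤ δ} => pNorm p (Delta2 v f))
        ⟨M, ?_⟩ ⟨u, hu, huδ⟩
      rintro _ ⟨⟨v, hv, hvδ⟩, rfl⟩
      exact pNorm_le (hM v ⟨hv.le, hvδ⟩)

end CpMem

section Steklov

variable {f g : ℝ → ℝ} {h x : ℝ}

lemma delta2_congr (hfg : EqOn f g (Ici x)) {u : ℝ} (hu : 0 ≤ u) :
    Delta2 u f x = Delta2 u g x := by
  rw [Delta2, Delta2, hfg (by simp; linarith : x + 2 * u ∈ Ici x),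
    hfg (by simpa using hu : x + u ∈ Ici x), hfg self_mem_Ici]

lemma steklov_congr (hfg : EqOn f g (Ici x)) (hh : 0 ≤ h) : steklov f h x = steklov g h x := by
  unfold steklov
  congr 1
  refine intervalIntegral.integral_congr fun s hs => intervalIntegral.integral_congr fun t ht => ?_
  rw [uIcc_of_le (by linarith)] at hs ht
  rw [hfg (by simp; linarith [hs.1, ht.1] : x + s + t ∈ Ici x),
    hfg (by simp; linarith [hs.1, ht.1] : x + 2 * (s + t) ∈ Ici x)]

lemma sub_steklov_eq (hf : Continuous f) (hh : h ≠ 0) (x : ℝ) :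
    f x - steklov f h x =
      4 / h ^ 2 * ∫ s in (0 : ℝ)..(h / 2), ∫ t in (0 : ℝ)..(h / 2), Delta2 (s + t) f x := by
  have hinner : ∀ s, ∫ t in (0 : ℝ)..(h / 2), Delta2 (s + t) f x =
      h / 2 * f x - ∫ t in (0 : ℝ)..(h / 2), (2 * f (x + s + t) - f (x + 2 * (s + t))) := by
    intro s
    have hΔ : ∀ t, Delta2 (s + t) f x = f x - (2 * f (x + s + t) - f (x + 2 * (s + t))) :=
      fun t => by rw [Delta2, add_assoc]; ring
    simp_rw [hΔ]
    rw [intervalIntegral.integral_sub intervalIntegrable_const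
      (Continuous.intervalIntegrable (by fun_prop) _ _)]
    simp
  have hcont : Continuous fun s =>
      ∫ t in (0 : ℝ)..(h / 2), (2 * f (x + s + t) - f (x + 2 * (s + t))) :=
    intervalIntegral.continuous_parametric_intervalIntegral_of_continuous' (by fun_prop) _ _
  simp_rw [hinner]
  rw [intervalIntegral.integral_sub intervalIntegrable_const (hcont.intervalIntegrable _ _)]
  simp only [intervalIntegral.integral_const, sub_zero, smul_eq_mul, steklov]
  field_simp
  ring

lemma abs_sub_steklov_le_of_continuous (hf : Continuous f) (hh : 0 < h) {M : ℝ}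
    (hM : ∀ u ∈ Ioc 0 h, |Delta2 u f x| ≤ M) : |f x - steklov f h x| ≤ M := by
  have hint : ‖∫ s in (0 : ℝ)..(h / 2), ∫ t in (0 : ℝ)..(h / 2), Delta2 (s + t) f x‖
      ≤ M * |h / 2 - 0| * |h / 2 - 0| := by
    refine intervalIntegral.norm_integral_le_of_norm_le_const fun s hs => ?_
    refine intervalIntegral.norm_integral_le_of_norm_le_const fun t ht => ?_
    rw [uIoc_of_le (by linarith)] at hs ht
    exact hM (s + t) ⟨by linarith [hs.1, ht.1], by linarith [hs.2, ht.2]⟩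
  rw [sub_steklov_eq hf hh.ne', abs_mul, abs_of_pos (by positivity)]
  rw [Real.norm_eq_abs, sub_zero, abs_of_pos (half_pos hh)] at hint
  calc 4 / h ^ 2 * |_| ≤ 4 / h ^ 2 * (M * (h / 2) * (h / 2)) := by gcongr
    _ = M := by field_simp; ring

lemma abs_sub_steklov_le (hf : ContinuousOn f (Ici 0)) (hh : 0 < h) (hx : 0 ≤ x) {M : ℝ}
    (hM : ∀ u ∈ Ioc 0 h, |Delta2 u f x| ≤ M) : |f x - steklov f h x| ≤ M := by
  set F : ℝ → ℝ := fun y => f (max y 0)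
  have hF : Continuous F := hf.comp_continuous (by fun_prop) fun y => le_max_right y 0
  have hfF : EqOn f F (Ici x) := fun y hy => by simp [F, max_eq_left (hx.trans hy)]
  rw [steklov_congr hfF hh.le, hfF self_mem_Ici]
  exact abs_sub_steklov_le_of_continuous hF hh fun u hu => delta2_congr hfF hu.1.le ▸ hM u hu

end Steklov

/-- The Steklov mean satisfies `‖f − f_h‖_p ≤ ω_p²(f;h)`. -/
theorem steklov_approx (p : ℕ) (f : ℝ → ℝ) (hf : CpMem p f) (h : ℝ) (hh : 0 < h) :
    pNorm p (fun x => f x - steklov f h x) ≤ omega2 p f h := by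
  refine pNorm_le fun x hx => ?_
  have hw := wp_pos p hx
  rw [mul_comm, ← le_div_iff₀ hw]
  refine abs_sub_steklov_le hf.continuousOn hh hx fun u hu => ?_
  rw [le_div_iff₀ hw, mul_comm]
  exact hf.weighted_delta2_le_omega2 hu.1 hu.2 hx
end
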